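/- For every integer ℓ ≥ 3, the cycle C_{2ℓ+1} on 2ℓ+1 vertices is not probe P5-free. -/

import Mathlib

/-!
Let `N` be the non-probes and `G' ≥ C` a `P₅`-free graph whose new edges lie inside `N`.
Five consecutive vertices `v₀ … v₄` of the cycle induce a `P₅` in `G'` unless one of
`v₂, v₃, v₄` is a non-probe, so `N ≠ ∅`. Looking at eight consecutive vertices, a non-probe
`v₁` with `v₃` a probe forces the chord `v₁v₄`, then `v₁v₆` or `v₄v₆`, and each choice
again yields an induced `P₅`. Hence `N` is closed under `u ↦ u + 2`, so, the cycle being odd,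
under `u ↦ u + 1`, contradicting the independence of `N`.
-/

open SimpleGraph
open scoped Fin.CommRing

/-- `H` does not occur as an induced subgraph of `G`. -/
def IndFree {W V : Type*} (H : SimpleGraph W) (G : SimpleGraph V) : Prop :=
  IsEmpty (H ↪g G)

/-- `(G, Nᶜ, N)` is a partitioned probe `H`-free graph. -/
def PartProbeFree {W V : Type*} (H : SimpleGraph W) (G : SimpleGraph V) (N : Set V) : Prop :=
  (∀ u ∈ N, ∀ v ∈ N, ¬ G.Adj u v) ∧
  ∃ G' : SimpleGraph V, G ≤ G' ∧
    (∀ u v, G'.Adj u v → ¬ G.Adj u v → u ∈ N ∧ v ∈ N) ∧ IndFree H G'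

/-- `G` is a probe `H`-free graph (for some choice of non-probes). -/
def ProbeFree {W V : Type*} (H : SimpleGraph W) (G : SimpleGraph V) : Prop :=
  ∃ N : Set V, PartProbeFree H G N

namespace Fin

lemma mem_add_one_of_forall_add_two {ℓ : ℕ} {S : Set (Fin (2 * ℓ + 1))}
    (hS : ∀ u ∈ S, u + 2 ∈ S) {u : Fin (2 * ℓ + 1)} (hu : u ∈ S) : u + 1 ∈ S := by
  have h2k (k : ℕ) : u + 2 * (k : Fin (2 * ℓ + 1)) ∈ S := by
    induction k with
    | zero => simpa using hu
    | succ k ih => simpa [mul_add, add_assoc] using hS _ ih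
  have htwo : 2 * ((ℓ + 1 : ℕ) : Fin (2 * ℓ + 1)) = 1 := by
    have h0 := natCast_self (2 * ℓ + 1)
    push_cast at h0 ⊢
    linear_combination h0
  simpa only [htwo] using h2k (ℓ + 1)

end Fin

namespace SimpleGraph

variable {V W : Type*} {G G' : SimpleGraph V} {N : Set V} {w : ℕ → V} {r : ℕ}

lemma injective_of_adj_iff {H : SimpleGraph W}
    (hH : ∀ i j, (∀ k, H.Adj i k ↔ H.Adj j k) → i = j) {f : W → V}
    (hf : ∀ i j, G.Adj (f i) (f j) ↔ H.Adj i j) : Function.Injective f :=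
  fun i j hij => hH i j fun k => by rw [← hf, ← hf, hij]

lemma not_indFree_pathGraph_five {a b c d e : V}
    (hab : G.Adj a b) (hbc : G.Adj b c) (hcd : G.Adj c d) (hde : G.Adj d e)
    (hac : ¬ G.Adj a c) (had : ¬ G.Adj a d) (hae : ¬ G.Adj a e)
    (hbd : ¬ G.Adj b d) (hbe : ¬ G.Adj b e) (hce : ¬ G.Adj c e) :
    ¬ IndFree (pathGraph 5) G := by
  have hf (i j : Fin 5) :
      G.Adj (![a, b, c, d, e] i) (![a, b, c, d, e] j) ↔ (pathGraph 5).Adj i j := by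
    fin_cases i <;> fin_cases j <;> simp [pathGraph_adj, *] <;> rw [adj_comm] <;> assumption
  have hP : ∀ i j : Fin 5, (∀ k, (pathGraph 5).Adj i k ↔ (pathGraph 5).Adj j k) → i = j := by
    simp only [pathGraph_adj]; decide
  rw [IndFree, not_isEmpty_iff]
  exact ⟨⟨⟨_, injective_of_adj_iff hP hf⟩, hf _ _⟩⟩

def IsLocallyInducedPath (G : SimpleGraph V) (w : ℕ → V) (r : ℕ) : Prop :=
  ∀ i j, i < j → j ≤ i + r → (G.Adj (w i) (w j) ↔ j = i + 1)

lemma isLocallyInducedPath_cycleGraph {n r : ℕ} [NeZero n] (hr : r + 2 ≤ n) (z : Fin n) :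
    IsLocallyInducedPath (cycleGraph n) (fun i => z + i) r := by
  intro i j hij hjr
  obtain ⟨d, rfl⟩ : ∃ d, j = i + d := ⟨j - i, by omega⟩
  obtain ⟨m, rfl⟩ : ∃ m, n = m + 2 := ⟨n - 2, by omega⟩
  have h1 : (z + i) - (z + ↑(i + d)) = 1 ↔ ((d + 1 : ℕ) : Fin (m + 2)) = 0 := by
    push_cast; constructor <;> intro h <;> linear_combination -h
  have h2 : (z + ↑(i + d)) - (z + i) = 1 ↔ d = 1 := by
    rw [Nat.cast_add, add_sub_add_left_eq_sub, add_sub_cancel_left, Fin.ext_iff,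
      Fin.val_natCast, Fin.val_one, Nat.mod_eq_of_lt (by omega)]
  rw [cycleGraph_adj, h1, h2, Fin.natCast_eq_zero]
  constructor
  · rintro (h | h)
    · exact absurd (Nat.le_of_dvd (by omega) h) (by omega)
    · omega
  · omega

namespace IsLocallyInducedPath

lemma adj_succ (hw : IsLocallyInducedPath G w r) (hr : 1 ≤ r) (i : ℕ) :
    G.Adj (w i) (w (i + 1)) :=
  (hw i _ (by omega) (by omega)).2 rfl

lemma not_adj (hw : IsLocallyInducedPath G w r) {i j : ℕ}
    (hij : i + 2 ≤ j ∧ j ≤ i + r ∨ j + 2 ≤ i ∧ i ≤ j + r := by omega) :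
    ¬ G.Adj (w i) (w j) := by
  rcases hij with ⟨h₁, h₂⟩ | ⟨h₁, h₂⟩
  · rw [hw i j (by omega) h₂]; omega
  · rw [adj_comm, hw j i (by omega) h₂]; omega

lemma not_adj_of_not_mem (hw : IsLocallyInducedPath G w r)
    (hnew : ∀ u v, G'.Adj u v → ¬ G.Adj u v → u ∈ N ∧ v ∈ N) {i j : ℕ}
    (hN : w i ∉ N ∨ w j ∉ N)
    (hij : i + 2 ≤ j ∧ j ≤ i + r ∨ j + 2 ≤ i ∧ i ≤ j + r := by omega) :
    ¬ G'.Adj (w i) (w j) :=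
  fun h => by
    obtain ⟨hi, hj⟩ := hnew _ _ h (hw.not_adj hij)
    tauto

variable (hw : IsLocallyInducedPath G w 5) (hle : G ≤ G')
  (hnew : ∀ u v, G'.Adj u v → ¬ G.Adj u v → u ∈ N ∧ v ∈ N)
  (hfree : IndFree (pathGraph 5) G')
include hw hle hnew hfree

lemma mem_two_or_mem_three_or_mem_four : w 2 ∈ N ∨ w 3 ∈ N ∨ w 4 ∈ N := by
  have e i := hle (hw.adj_succ (by norm_num) i)
  by_contra! h
  obtain ⟨h₂, h₃, h₄⟩ := h
  exact not_indFree_pathGraph_five (e 0) (e 1) (e 2) (e 3)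
    (hw.not_adj_of_not_mem hnew (.inr h₂)) (hw.not_adj_of_not_mem hnew (.inr h₃))
    (hw.not_adj_of_not_mem hnew (.inr h₄)) (hw.not_adj_of_not_mem hnew (.inr h₃))
    (hw.not_adj_of_not_mem hnew (.inr h₄)) (hw.not_adj_of_not_mem hnew (.inl h₂)) hfree

lemma mem_three_of_mem_one (hN : ∀ u ∈ N, ∀ v ∈ N, ¬ G.Adj u v) (h₁ : w 1 ∈ N) :
    w 3 ∈ N := by
  have e i := hle (hw.adj_succ (by norm_num) i)
  have nadj {i j : ℕ} (h : w i ∉ N ∨ w j ∉ N)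
      (hij : i + 2 ≤ j ∧ j ≤ i + 5 ∨ j + 2 ≤ i ∧ i ≤ j + 5 := by omega) :=
    hw.not_adj_of_not_mem hnew h hij
  have succ_not_mem {i} (h : w i ∈ N) : w (i + 1) ∉ N :=
    fun h' => hN _ h _ h' (hw.adj_succ (by norm_num) i)
  by_contra h₃
  have h₀ : w 0 ∉ N := fun h => succ_not_mem h h₁
  have h₂ : w 2 ∉ N := succ_not_mem h₁
  have h₄ : w 4 ∈ N := by have := hw.mem_two_or_mem_three_or_mem_four hle hnew hfree; tauto
  have h₅ : w 5 ∉ N := succ_not_mem h₄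
  have c₁₄ : G'.Adj (w 1) (w 4) := by
    by_contra h
    exact not_indFree_pathGraph_five (e 0) (e 1) (e 2) (e 3) (nadj (.inr h₂))
      (nadj (.inr h₃)) (nadj (.inl h₀)) (nadj (.inr h₃)) h (nadj (.inl h₂)) hfree
  have c₆ : G'.Adj (w 1) (w 6) ∨ G'.Adj (w 4) (w 6) := by
    by_contra! h
    exact not_indFree_pathGraph_five (e 1).symm c₁₄ (e 4) (e 5) (nadj (.inl h₂))
      (nadj (.inl h₂)) (nadj (.inl h₂)) (nadj (.inr h₅)) h.1 h.2 hfree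
  have h₆ : w 6 ∈ N := by
    rcases c₆ with h | h <;> exact (hnew _ _ h hw.not_adj).2
  have h₇ : w 7 ∉ N := succ_not_mem h₆
  rcases c₆ with c₁₆ | c₄₆
  · exact not_indFree_pathGraph_five (e 5) c₁₆.symm (e 1) (e 2) (nadj (.inl h₅))
      (nadj (.inl h₅)) (nadj (.inl h₅)) (nadj (.inr h₂)) (nadj (.inr h₃)) (nadj (.inr h₃)) hfree
  · exact not_indFree_pathGraph_five (e 2) (e 3) c₄₆ (e 6) (nadj (.inl h₂))
      (nadj (.inl h₂)) (nadj (.inl h₂)) (nadj (.inl h₃)) (nadj (.inl h₃)) (nadj (.inr h₇)) hfree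

end IsLocallyInducedPath

end SimpleGraph

theorem stmt_8 (ℓ : ℕ) (hℓ : 3 ≤ ℓ) :
    ¬ ProbeFree (pathGraph 5) (cycleGraph (2 * ℓ + 1)) := by
  rintro ⟨N, hN, G', hle, hnew, hfree⟩
  have hw (z : Fin (2 * ℓ + 1)) :
      IsLocallyInducedPath (cycleGraph (2 * ℓ + 1)) (fun i => z + i) 5 :=
    isLocallyInducedPath_cycleGraph (by omega) z
  have hS : ∀ u ∈ N, u + 2 ∈ N := fun u hu => by
    have := (hw (u - 1)).mem_three_of_mem_one hle hnew hfree hN (by simpa using hu)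
    convert this using 1
    push_cast; ring
  obtain ⟨u, hu⟩ : N.Nonempty := by
    rcases (hw 0).mem_two_or_mem_three_or_mem_four hle hnew hfree with h | h | h <;> exact ⟨_, h⟩
  have hadj : (cycleGraph (2 * ℓ + 1)).Adj u (u + 1) := by
    simpa using (hw u).adj_succ (by norm_num) 0
  exact hN u hu _ (Fin.mem_add_one_of_forall_add_two hS hu) hadj
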